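/- In any 1D assigned crease pattern in which every suspicious interval is innocent, there exists either a crimpable segment or an end-foldable segment. -/

import Mathlib

open Finset

/-- A 1D crease pattern: paper `[0, L]` with creases `c 0 < c 1 < ⋯ < c (n-1)`
strictly inside the paper. -/
structure CreasePattern1D where
  L : ℝ
  n : ℕ
  c : Fin n → ℝ
  mono : StrictMono c
  pos : ∀ i, 0 < c i
  lt_len : ∀ i, c i < L

namespace CreasePattern1D

variable (P : CreasePattern1D)

/-- The folded-state map: `f x = x` on the first segment, and the slope flips
sign at every crease (alternating reflection). -/
noncomputable def foldMap (x : ℝ) : ℝ :=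
  (-1 : ℝ) ^ ((univ.filter fun i => P.c i ≤ x)).card * x
    + 2 * ∑ i ∈ univ.filter (fun i => P.c i ≤ x), (-1 : ℝ) ^ (i : ℕ) * P.c i

/-- Vertex `j` of the pattern: `pt 0 = 0` (left end), `pt (j) = c (j-1)` for
`1 ≤ j ≤ n`, and `pt j = L` (right end) for `j ≥ n+1`. -/
noncomputable def pt (j : ℕ) : ℝ :=
  if j = 0 then 0 else if h : j - 1 < P.n then P.c ⟨j - 1, h⟩ else P.L

/-- The interval between creases `p ≤ q` is *suspicious* if the folded images of
the far endpoints of its two flaps both lie strictly outside the folded image of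
the interval. -/
def Suspicious (p q : Fin P.n) : Prop :=
  p ≤ q ∧
  P.foldMap (P.pt (p : ℕ)) ∉ P.foldMap '' Set.Icc (P.c p) (P.c q) ∧
  P.foldMap (P.pt ((q : ℕ) + 2)) ∉ P.foldMap '' Set.Icc (P.c p) (P.c q)

/-- Number of mountain creases in the closed interval `[c p, c q]`
(`a i = true` means crease `i` is a mountain). -/
def countM (a : Fin P.n → Bool) (p q : Fin P.n) : ℕ :=
  ((univ : Finset (Fin P.n)).filter fun i => p ≤ i ∧ i ≤ q ∧ a i = true).card

/-- Number of valley creases in the closed interval `[c p, c q]`. -/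
def countV (a : Fin P.n → Bool) (p q : Fin P.n) : ℕ :=
  ((univ : Finset (Fin P.n)).filter fun i => p ≤ i ∧ i ≤ q ∧ a i = false).card

/-- An interval is *innocent* if its mountain and valley counts differ by at
most one. -/
def Innocent (a : Fin P.n → Bool) (p q : Fin P.n) : Prop :=
  (P.countM a p q : ℤ) - P.countV a p q ≤ 1 ∧
  (P.countV a p q : ℤ) - P.countM a p q ≤ 1

/-- Every suspicious interval is innocent. -/
def AllInnocent (a : Fin P.n → Bool) : Prop :=
  ∀ p q : Fin P.n, P.Suspicious p q → P.Innocent a p q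

end CreasePattern1D

namespace CreasePattern1D

variable (P : CreasePattern1D)

/-- The segment between the consecutive creases `c i` and `c (i+1)` is
*crimpable* if the two creases have opposite assignments and the segment is
nonstrictly shorter than both of its neighboring segments (its flaps). -/
def Crimpable (a : Fin P.n → Bool) (i : Fin P.n) : Prop :=
  ∃ h : (i : ℕ) + 1 < P.n,
    a i ≠ a ⟨(i : ℕ) + 1, h⟩ ∧
    P.c ⟨(i : ℕ) + 1, h⟩ - P.c i ≤ P.c i - P.pt (i : ℕ) ∧
    P.c ⟨(i : ℕ) + 1, h⟩ - P.c i ≤ P.pt ((i : ℕ) + 3) - P.c ⟨(i : ℕ) + 1, h⟩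

/-- The leftmost segment `[0, c 0]` is *end-foldable*: it is nonstrictly
shorter than the following segment. -/
def EndFoldableLeft : Prop :=
  ∃ h : 0 < P.n, P.c ⟨0, h⟩ - 0 ≤ P.pt 2 - P.c ⟨0, h⟩

/-- The rightmost segment `[c (n-1), L]` is *end-foldable*: it is nonstrictly
shorter than the preceding segment. -/
def EndFoldableRight : Prop :=
  ∃ h : 0 < P.n,
    P.L - P.c ⟨P.n - 1, by omega⟩ ≤ P.c ⟨P.n - 1, by omega⟩ - P.pt (P.n - 1)

/-- Some end segment is end-foldable. -/
def EndFoldable : Prop := P.EndFoldableLeft ∨ P.EndFoldableRight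

end CreasePattern1D

/-!
If neither end segment is end-foldable, the sequence of segment lengths goes down at its
left end and up at its right end, so it has a plateau of equal segments, of length `m` say,
that is strictly shorter than the two flaps around it. If two adjacent creases of the plateau
carry different assignments, the segment between them is crimpable. Otherwise all creases of
the plateau carry the same assignment, so the interval they span is not innocent. But it is
suspicious: the plateau zigzags inside an interval of length `m`, and the longer flaps leave it.
-/

structure IsMinPlateau {α : Type*} [LinearOrder α] (d : ℕ → α) (p q : ℕ) : Prop where
  lt : p < q
  eq : ∀ j, p < j → j ≤ q → d j = d q
  lt_left : d q < d p
  lt_right : d q < d (q + 1)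

namespace IsMinPlateau

variable {α : Type*} [LinearOrder α] {d : ℕ → α} {p q : ℕ}

theorem le (h : IsMinPlateau d p q) {j : ℕ} (hpj : p ≤ j) (hjq : j ≤ q + 1) :
    d q ≤ d j := by
  rcases hpj.eq_or_lt with rfl | hpj
  · exact h.lt_left.le
  rcases hjq.eq_or_lt with rfl | hjq
  · exact h.lt_right.le
  · exact (h.eq j hpj (by omega)).ge

end IsMinPlateau

theorem exists_isMinPlateau_of_run {α : Type*} [LinearOrder α] {d : ℕ → α} {p s r : ℕ}
    (hps : p < s) (hsr : s ≤ r) (hdrop : d s < d p)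
    (hrun : ∀ j, p < j → j ≤ s → d j = d s) (hr : d r < d (r + 1)) :
    ∃ p' q, q ≤ r ∧ IsMinPlateau d p' q := by
  obtain ⟨k, rfl⟩ := Nat.exists_eq_add_of_le hsr
  clear hsr
  induction k generalizing p s with
  | zero => exact ⟨p, s, le_rfl, hps, hrun, hdrop, hr⟩
  | succ k ih =>
    have hr' : d (s + 1 + k) < d (s + 1 + k + 1) := by rwa [add_right_comm]
    rcases lt_trichotomy (d (s + 1)) (d s) with hlt | heq | hgt
    · obtain ⟨p', q, hq, h⟩ := ih (p := s) (s := s + 1) (by omega) hlt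
        (fun j h₁ h₂ => by rw [show j = s + 1 by omega]) hr'
      exact ⟨p', q, by omega, h⟩
    · obtain ⟨p', q, hq, h⟩ := ih (p := p) (s := s + 1) (by omega) (heq ▸ hdrop)
        (fun j h₁ h₂ => by
          rcases h₂.eq_or_lt with rfl | h₂
          · rfl
          · rw [heq]; exact hrun j h₁ (by omega)) hr'
      exact ⟨p', q, by omega, h⟩
    · exact ⟨p, s, by omega, hps, hrun, hdrop, hgt⟩

theorem exists_isMinPlateau {α : Type*} [LinearOrder α] {d : ℕ → α} {r : ℕ}
    (h₀ : d 1 < d 0) (hr : d r < d (r + 1)) : ∃ p q, q ≤ r ∧ IsMinPlateau d p q := by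
  rcases Nat.eq_zero_or_pos r with rfl | hr₀
  · exact absurd h₀ hr.not_gt
  · exact exists_isMinPlateau_of_run zero_lt_one hr₀ h₀
      (fun j h₁ h₂ => by rw [show j = 1 by omega]) hr

theorem exists_mem_Icc_succ_of_mem_Icc {α : Type*} [LinearOrder α] (f : ℕ → α) {i k : ℕ}
    (hik : i < k) {x : α} (hx : x ∈ Set.Icc (f i) (f k)) :
    ∃ j, i ≤ j ∧ j < k ∧ x ∈ Set.Icc (f j) (f (j + 1)) := by
  induction k, hik using Nat.le_induction with
  | base => exact ⟨i, le_rfl, Nat.lt_succ_self i, hx⟩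
  | succ k hik ih =>
    by_cases hxk : x ≤ f k
    · obtain ⟨j, hij, hjk, hj⟩ := ih ⟨hx.1, hxk⟩
      exact ⟨j, hij, by omega, hj⟩
    · exact ⟨k, by omega, by omega, (not_le.mp hxk).le, hx.2⟩

theorem Fin.apply_eq_of_forall_apply_succ_eq {n : ℕ} {β : Type*} (a : Fin n → β) (p q : Fin n)
    (h : ∀ (i : Fin n) (hi : (i : ℕ) + 1 < n), p ≤ i → i < q → a i = a ⟨i + 1, hi⟩) :
    ∀ i, p ≤ i → i ≤ q → a i = a p := by
  rintro ⟨i, hi⟩ hpi hiq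
  simp only [Fin.le_def] at hpi hiq
  induction i with
  | zero => rw [show p = ⟨0, hi⟩ from Fin.ext (Nat.le_zero.mp hpi)]
  | succ i ih =>
    rcases hpi.eq_or_lt with hp | hp
    · rw [show p = ⟨i + 1, hi⟩ from Fin.ext hp]
    · rw [← h ⟨i, by omega⟩ hi (Fin.le_def.mpr (by simp; omega))
        (Fin.lt_def.mpr (by simp; omega))]
      exact ih (by omega) (by omega) (by omega)

namespace CreasePattern1D

variable (P : CreasePattern1D)

/-- Segments `0` and `n` are the end segments. -/
noncomputable def segLen (j : ℕ) : ℝ := P.pt (j + 1) - P.pt j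

/-- The constant term of `foldMap` on the `j`-th segment. -/
noncomputable def foldOffset (j : ℕ) : ℝ :=
  2 * ∑ i ∈ univ.filter (fun i : Fin P.n => (i : ℕ) < j), (-1 : ℝ) ^ (i : ℕ) * P.c i

@[simp]
theorem pt_zero : P.pt 0 = 0 := by simp [pt]

theorem pt_succ {j : ℕ} (hj : j < P.n) : P.pt (j + 1) = P.c ⟨j, hj⟩ := by simp [pt, hj]

theorem pt_of_lt {j : ℕ} (hj : P.n < j) : P.pt j = P.L := by
  simp [pt, show j ≠ 0 by omega, show ¬ j - 1 < P.n by omega]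

theorem pt_mono (hn : 0 < P.n) : Monotone P.pt := by
  refine monotone_nat_of_le_succ fun j => ?_
  rcases Nat.lt_trichotomy j P.n with hj | rfl | hj
  · cases j with
    | zero => simpa [P.pt_succ hn] using (P.pos ⟨0, hn⟩).le
    | succ j =>
      rw [P.pt_succ (by omega), P.pt_succ hj]
      exact P.mono.monotone (Fin.le_def.mpr (by simp))
  · rw [P.pt_of_lt (Nat.lt_succ_self _), show P.n = P.n - 1 + 1 by omega,
      P.pt_succ (by omega)]
    exact (P.lt_len _).le
  · rw [P.pt_of_lt hj, P.pt_of_lt (by omega)]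

theorem segLen_nonneg (hn : 0 < P.n) (j : ℕ) : 0 ≤ P.segLen j :=
  sub_nonneg.mpr (P.pt_mono hn (Nat.le_succ j))

theorem c_le_iff_of_mem_Ico (hn : 0 < P.n) {j : ℕ} {x : ℝ}
    (hx : x ∈ Set.Ico (P.pt j) (P.pt (j + 1))) (i : Fin P.n) : P.c i ≤ x ↔ (i : ℕ) < j := by
  rw [← P.pt_succ i.isLt]
  constructor
  · intro hi
    by_contra! hji
    exact (hx.2.trans_le (P.pt_mono hn (by omega))).not_ge hi
  · intro hij
    exact (P.pt_mono hn hij).trans hx.1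

theorem foldMap_eq_of_forall_c_le_iff {j : ℕ} (hj : j ≤ P.n) {x : ℝ}
    (hx : ∀ i, P.c i ≤ x ↔ (i : ℕ) < j) : P.foldMap x = (-1) ^ j * x + P.foldOffset j := by
  unfold foldMap foldOffset
  rw [filter_congr fun i _ => hx i, Fin.card_filter_val_lt, min_eq_right hj]

theorem foldOffset_succ {j : ℕ} (hj : j < P.n) :
    P.foldOffset (j + 1) = P.foldOffset j + 2 * ((-1) ^ j * P.c ⟨j, hj⟩) := by
  have hins : univ.filter (fun i : Fin P.n => (i : ℕ) < j + 1)
      = insert ⟨j, hj⟩ (univ.filter fun i : Fin P.n => (i : ℕ) < j) := by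
    ext i
    simp only [Order.lt_add_one_iff, mem_filter, mem_univ, true_and, mem_insert, Fin.ext_iff]
    omega
  rw [foldOffset, foldOffset, hins, sum_insert (by simp)]
  ring

theorem foldMap_of_mem_Icc (hn : 0 < P.n) {j : ℕ} (hj : j ≤ P.n) {x : ℝ}
    (hx : x ∈ Set.Icc (P.pt j) (P.pt (j + 1))) : P.foldMap x = (-1) ^ j * x + P.foldOffset j := by
  rcases hx.2.lt_or_eq with hlt | rfl
  · exact P.foldMap_eq_of_forall_c_le_iff hj (P.c_le_iff_of_mem_Ico hn ⟨hx.1, hlt⟩)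
  rcases hj.lt_or_eq with hj | rfl
  · -- the right endpoint is the crease `c j`, where the slope flips
    rw [P.pt_succ hj, P.foldMap_eq_of_forall_c_le_iff hj (fun i => by
      rw [P.mono.le_iff_le, Fin.le_def, Nat.lt_succ_iff]), P.foldOffset_succ hj, pow_succ]
    ring
  · refine P.foldMap_eq_of_forall_c_le_iff le_rfl fun i => iff_of_true ?_ i.isLt
    rw [P.pt_of_lt (Nat.lt_succ_self _)]
    exact (P.lt_len i).le

theorem foldMap_of_mem_segment (hn : 0 < P.n) {j : ℕ} (hj : j ≤ P.n) {x : ℝ}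
    (hx : x ∈ Set.Icc (P.pt j) (P.pt (j + 1))) :
    P.foldMap x = P.foldMap (P.pt j) + (-1) ^ j * (x - P.pt j) := by
  rw [P.foldMap_of_mem_Icc hn hj hx,
    P.foldMap_of_mem_Icc hn hj ⟨le_rfl, P.pt_mono hn (Nat.le_succ j)⟩]
  ring

theorem foldMap_pt_succ (hn : 0 < P.n) {j : ℕ} (hj : j ≤ P.n) :
    P.foldMap (P.pt (j + 1)) = P.foldMap (P.pt j) + (-1) ^ j * P.segLen j :=
  P.foldMap_of_mem_segment hn hj ⟨P.pt_mono hn (Nat.le_succ j), le_rfl⟩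

theorem foldMap_mem_uIcc (hn : 0 < P.n) {j : ℕ} (hj : j ≤ P.n) {x : ℝ}
    (hx : x ∈ Set.Icc (P.pt j) (P.pt (j + 1))) :
    P.foldMap x ∈ Set.uIcc (P.foldMap (P.pt j)) (P.foldMap (P.pt (j + 1))) := by
  have hlen : x - P.pt j ≤ P.segLen j := by unfold segLen; linarith [hx.2]
  have hpos : 0 ≤ x - P.pt j := sub_nonneg.mpr hx.1
  rw [P.foldMap_of_mem_segment hn hj hx, P.foldMap_pt_succ hn hj, Set.mem_uIcc]
  rcases neg_one_pow_eq_or ℝ j with h | h <;> rw [h]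
  · left; constructor <;> linarith
  · right; constructor <;> linarith

theorem image_foldMap_subset (hn : 0 < P.n) {i k : ℕ} (hik : i < k) (hk : k ≤ P.n + 1)
    {J : Set ℝ} [J.OrdConnected] (hJ : ∀ r, i ≤ r → r ≤ k → P.foldMap (P.pt r) ∈ J) :
    P.foldMap '' Set.Icc (P.pt i) (P.pt k) ⊆ J := by
  rintro _ ⟨x, hx, rfl⟩
  obtain ⟨j, hij, hjk, hxj⟩ := exists_mem_Icc_succ_of_mem_Icc P.pt hik hx
  exact Set.OrdConnected.uIcc_subset ‹_› (hJ j hij hjk.le) (hJ (j + 1) (by omega) hjk)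
    (P.foldMap_mem_uIcc hn (by omega) hxj)

theorem exists_foldMap_pt_eq_of_isMinPlateau (hn : 0 < P.n) {p q : ℕ} (hq : q < P.n)
    (hplat : IsMinPlateau P.segLen p q) :
    ∃ o, ∀ r, p + 1 ≤ r → r ≤ q + 1 →
      P.foldMap (P.pt r) = o + (-1) ^ (r + 1) * (P.segLen q / 2) := by
  refine ⟨P.foldMap (P.pt (p + 1)) + (-1) ^ (p + 1) * (P.segLen q / 2), fun r hpr hrq => ?_⟩
  induction r, hpr using Nat.le_induction with
  | base => ring
  | succ r hpr ih =>
    rw [P.foldMap_pt_succ hn (by omega), ih (by omega), hplat.eq r (by omega) (by omega)]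
    ring

theorem suspicious_of_isMinPlateau (hn : 0 < P.n) {p q : ℕ} (hq : q < P.n)
    (hplat : IsMinPlateau P.segLen p q) :
    P.Suspicious ⟨p, hplat.lt.trans hq⟩ ⟨q, hq⟩ := by
  have hpq := hplat.lt
  obtain ⟨o, ho⟩ := P.exists_foldMap_pt_eq_of_isMinPlateau hn hq hplat
  have hdist (k : ℕ) (t : ℝ) : dist (o + (-1) ^ k * t) o = |t| := by
    simp
  have : (Metric.closedBall o (P.segLen q / 2)).OrdConnected := by
    rw [Real.closedBall_eq_Icc]
    infer_instance
  have himage : P.foldMap '' Set.Icc (P.c ⟨p, hplat.lt.trans hq⟩) (P.c ⟨q, hq⟩)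
      ⊆ Metric.closedBall o (P.segLen q / 2) := by
    rw [← P.pt_succ, ← P.pt_succ]
    refine P.image_foldMap_subset hn (by omega) (by omega) fun r hpr hrq => ?_
    rw [Metric.mem_closedBall, ho r hpr hrq, hdist,
      abs_of_nonneg (by linarith [P.segLen_nonneg hn q])]
  -- a flap longer than the plateau segments leaves the ball whichever way it is folded
  have hflap (k : ℕ) (ℓ : ℝ) (hℓ : P.segLen q < ℓ) :
      o + (-1) ^ k * (ℓ - P.segLen q / 2) ∉ Metric.closedBall o (P.segLen q / 2) := by
    rw [Metric.mem_closedBall, hdist, not_le]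
    exact lt_of_lt_of_le (by linarith) (le_abs_self _)
  refine ⟨Fin.le_def.mpr hplat.lt.le, fun hl => ?_, fun hr => ?_⟩
  · have hl' : P.foldMap (P.pt p) ∈ _ := hl
    have hstep := P.foldMap_pt_succ hn (j := p) (by omega)
    rw [show P.foldMap (P.pt p) = o + (-1) ^ (p + 1) * (P.segLen p - P.segLen q / 2) by
      linear_combination ho (p + 1) le_rfl (by omega) - hstep] at hl'
    exact hflap _ _ hplat.lt_left (himage hl')
  · have hr' : P.foldMap (P.pt (q + 2)) ∈ _ := hr
    rw [P.foldMap_pt_succ hn (j := q + 1) (by omega), ho (q + 1) (by omega) le_rfl,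
      show ∀ x y z : ℝ, x + y + z = x + (y + z) from fun _ _ _ => by ring] at hr'
    exact hflap (q + 1) _ hplat.lt_right (by convert himage hr' using 2; ring)

theorem not_innocent_of_forall_eq (a : Fin P.n → Bool) {p q : Fin P.n} (hpq : p < q)
    (hconst : ∀ i, p ≤ i → i ≤ q → a i = a p) : ¬ P.Innocent a p q := by
  have hcount (b : Bool) : univ.filter (fun i => p ≤ i ∧ i ≤ q ∧ a i = b)
      = if a p = b then Icc p q else ∅ := by
    ext i
    split_ifs with hb
    · simp +contextual [← hb, hconst]
    · simp +contextual [hconst, hb]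
  have hcard : 2 ≤ #(Icc p q) := by
    rw [Fin.card_Icc]
    omega
  unfold Innocent countM countV
  rw [hcount, hcount]
  cases a p <;> simp <;> omega

theorem crimpable_of_segLen_le (a : Fin P.n → Bool) (i : Fin P.n) (hi : (i : ℕ) + 1 < P.n)
    (ha : a i ≠ a ⟨i + 1, hi⟩) (hleft : P.segLen (i + 1) ≤ P.segLen i)
    (hright : P.segLen (i + 1) ≤ P.segLen (i + 2)) : P.Crimpable a i := by
  have h₁ : P.pt (i + 1) = P.c i := P.pt_succ i.isLt
  have h₂ : P.pt (i + 2) = P.c ⟨i + 1, hi⟩ := P.pt_succ hi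
  rw [segLen, segLen, h₁, h₂] at hleft
  rw [segLen, segLen, h₁, h₂] at hright
  exact ⟨hi, ha, hleft, hright⟩

theorem crimpable_of_isMinPlateau (a : Fin P.n → Bool) {p q : ℕ}
    (hplat : IsMinPlateau P.segLen p q) (i : Fin P.n) (hi : (i : ℕ) + 1 < P.n) (hpi : p ≤ i)
    (hiq : (i : ℕ) < q) (ha : a i ≠ a ⟨i + 1, hi⟩) : P.Crimpable a i := by
  refine P.crimpable_of_segLen_le a i hi ha ?_ ?_ <;>
    rw [hplat.eq (i + 1) (by omega) (by omega)] <;> exact hplat.le (by omega) (by omega)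

theorem segLen_one_lt_segLen_zero (hn : 0 < P.n) (h : ¬ P.EndFoldableLeft) :
    P.segLen 1 < P.segLen 0 := by
  simp only [EndFoldableLeft, hn, exists_true_left, not_le] at h
  simp only [segLen, zero_add, P.pt_succ hn, pt_zero]
  linarith

theorem segLen_pred_lt_segLen (hn : 0 < P.n) (h : ¬ P.EndFoldableRight) :
    P.segLen (P.n - 1) < P.segLen (P.n - 1 + 1) := by
  have h₁ := P.pt_succ (j := P.n - 1) (by omega)
  simp only [EndFoldableRight, hn, exists_true_left, not_le] at h
  simp only [Nat.sub_add_cancel hn] at h₁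
  simp only [segLen, Nat.sub_add_cancel hn, P.pt_of_lt (Nat.lt_succ_self _), h₁]
  linarith

end CreasePattern1D

theorem exists_crimp_or_endfold (P : CreasePattern1D) (a : Fin P.n → Bool)
    (hn : 0 < P.n) (h : P.AllInnocent a) :
    (∃ i : Fin P.n, P.Crimpable a i) ∨ P.EndFoldable := by
  rw [or_iff_not_imp_right, CreasePattern1D.EndFoldable, not_or]
  rintro ⟨hL, hR⟩
  obtain ⟨p, q, hqn, hplat⟩ := exists_isMinPlateau (P.segLen_one_lt_segLen_zero hn hL)
    (P.segLen_pred_lt_segLen hn hR)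
  have hq : q < P.n := by omega
  by_contra! hnone
  have hconst := Fin.apply_eq_of_forall_apply_succ_eq a ⟨p, hplat.lt.trans hq⟩ ⟨q, hq⟩
    fun i hi hpi hiq => by
      by_contra ha
      exact hnone i (P.crimpable_of_isMinPlateau a hplat i hi hpi hiq ha)
  exact P.not_innocent_of_forall_eq a hplat.lt hconst
    (h _ _ (P.suspicious_of_isMinPlateau hn hq hplat))
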